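/- arXiv:1709.03630 — 2 statements merged into one kernel-verified Lean document; each statement's English description precedes it below -/
import Mathlib

section
/- Fix u ∈ (0,1) and w ∈ (0,1]. For R > 0 write φ_R(p) = 2(uR - 1)w·p·(1/2 - p) - ((1-u)w + 2u)·p + u, and let p(R) ∈ (0, 1/2) be the unique root of φ_R in [0, 1/2). Then p(R) is strictly increasing in R: if 1 < R₁ < R₂ then p(R₁) < p(R₂). -/
open Set

/-- The equilibrium cooperator fraction is strictly increasing in the
multiplication factor `R`. -/
theorem equilibrium_fraction_strictMono_in_R
    (u w : ℝ) (hu : u ∈ Set.Ioo (0 : ℝ) 1) (hw : w ∈ Set.Ioc (0 : ℝ) 1)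
    (φ : ℝ → ℝ → ℝ)
    (hφ : ∀ R p, φ R p = 2 * (u * R - 1) * w * p * (1 / 2 - p) -
        ((1 - u) * w + 2 * u) * p + u)
    (R₁ R₂ p₁ p₂ : ℝ) (hR₁ : 1 < R₁) (hR₁₂ : R₁ < R₂)
    (hp₁ : p₁ ∈ Set.Ico (0 : ℝ) (1 / 2)) (hroot₁ : φ R₁ p₁ = 0)
    (hp₂ : p₂ ∈ Set.Ico (0 : ℝ) (1 / 2)) (hroot₂ : φ R₂ p₂ = 0) :
    p₁ < p₂ := by
  obtain ⟨hu0, hu1⟩ := hu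
  obtain ⟨hw0, hw1⟩ := hw
  obtain ⟨hp₁0, hp₁h⟩ := hp₁
  obtain ⟨hp₂0, hp₂h⟩ := hp₂
  rw [hφ] at hroot₁ hroot₂
  have hp₁pos : 0 < p₁ := by
    rcases lt_or_eq_of_le hp₁0 with h | h
    · exact h
    · exfalso; rw [← h] at hroot₁; nlinarith
  have hp₂pos : 0 < p₂ := by
    rcases lt_or_eq_of_le hp₂0 with h | h
    · exact h
    · exfalso; rw [← h] at hroot₂; nlinarith
  by_contra hcon
  push_neg at hcon
  -- g(p₁) = φ R₂ p₁ > 0, since increasing R increases the R-dependent term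
  have key : 2 * (u * R₂ - 1) * w * p₁ * (1 / 2 - p₁) -
      ((1 - u) * w + 2 * u) * p₁ + u > 0 := by
    nlinarith [mul_pos (mul_pos (mul_pos hu0 (sub_pos.mpr hR₁₂)) hw0)
      (mul_pos hp₁pos (by linarith : (0:ℝ) < 1 / 2 - p₁))]
  -- identity: p₂ * g(p₁) = (p₁ - p₂) * (-A * p₁ * p₂ - u), using g(p₂) = 0
  have hid : (p₁ - p₂) * (-(2 * (u * R₂ - 1) * w) * p₁ * p₂ - u) > 0 := by
    nlinarith [mul_pos hp₂pos key, mul_nonneg hp₁pos.le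
      (le_of_eq hroot₂.symm)]
  have hdiff : 0 < p₁ - p₂ := by
    rcases lt_or_eq_of_le hcon with h | h
    · linarith
    · exfalso; rw [h] at hid; simp at hid
  have hX : -(2 * (u * R₂ - 1) * w) * p₁ * p₂ - u > 0 := by
    rcases mul_pos_iff.mp hid with ⟨_, h⟩ | ⟨h, _⟩
    · exact h
    · linarith
  -- from g(1/2) = u - B/2 < 0 :  -A * (1/2) * p₂ - u < 0
  have hY : -(2 * (u * R₂ - 1) * w) * (1 / 2) * p₂ - u < 0 := by
    nlinarith [mul_pos hp₂pos (mul_pos (by linarith : (0:ℝ) < 1 - u) hw0),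
      (by linarith : (0:ℝ) < 1 / 2 - p₂), hroot₂]
  -- A < 0
  have hAneg : 2 * (u * R₂ - 1) * w < 0 := by
    nlinarith [mul_pos hp₁pos hp₂pos]
  -- contradiction: -A*p₂ > 0 and p₁ < 1/2 give -A*p₁*p₂ < -A*(1/2)*p₂
  nlinarith [mul_pos (mul_pos (neg_pos.mpr hAneg) hp₂pos)
    (by linarith : (0:ℝ) < 1 / 2 - p₁)]
end

section
/- Let p ∈ (0, 1/2) be a root of φ(p) = 2(1-uR)w·p² + (uw(R+1) - 2u - 2w)·p + u with u ∈ (0,1), w ∈ (0,1], R > 1. Set π_C(p) = Rp - 1 and π_D(p) = Rp. Then the pair (x_C, x_D) = (pN, (1-p)N) satisfies the equilibrium system p = [(1-u/2)·p·(1 + w·π_C(p)) + (u/2)·(1-p)·(1 + w·π_D(p))]·f_N and 1-p = [(u/2)·p·(1 + w·π_C(p)) + (1-u/2)·(1-p)·(1 + w·π_D(p))]·f_N if and only if f_N = 1/(1 + w(R-1)p). -/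
/-!
The root condition on `p` says exactly that, after mutation, cooperators receive the share `p`
of all offspring. Since the mean fitness is `1 + w(R-1)p`, both equilibrium equations then read
`x = x (1 + w(R-1)p) f_N`, i.e. `(1 + w(R-1)p) f_N = 1`.
-/

theorem mean_fitness_eq (w R p : ℝ) :
    p * (1 + w * (R * p - 1)) + (1 - p) * (1 + w * (R * p)) = 1 + w * (R - 1) * p := by
  ring

theorem cooperator_offspring_eq_of_root {u w R p : ℝ}
    (hroot : 2 * (1 - u * R) * w * p ^ 2 + (u * w * (R + 1) - 2 * u - 2 * w) * p + u = 0) :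
    (1 - u / 2) * p * (1 + w * (R * p - 1)) + (u / 2) * (1 - p) * (1 + w * (R * p)) =
      p * (1 + w * (R - 1) * p) := by
  linear_combination hroot / 2

theorem defector_offspring_eq_of_root {u w R p : ℝ}
    (hroot : 2 * (1 - u * R) * w * p ^ 2 + (u * w * (R + 1) - 2 * u - 2 * w) * p + u = 0) :
    (u / 2) * p * (1 + w * (R * p - 1)) + (1 - u / 2) * (1 - p) * (1 + w * (R * p)) =
      (1 - p) * (1 + w * (R - 1) * p) := by
  linear_combination mean_fitness_eq w R p - cooperator_offspring_eq_of_root hroot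

theorem fixed_point_iff_eq_one_div {p G f : ℝ} (hp : p ≠ 0) (hG : G ≠ 0) :
    (p = p * G * f ∧ 1 - p = (1 - p) * G * f) ↔ f = 1 / G := by
  constructor
  · rintro ⟨hfix, -⟩
    have hGf : G * f = 1 := mul_left_cancel₀ hp (by rw [mul_one, ← mul_assoc, ← hfix])
    exact eq_one_div_of_mul_eq_one_right hGf
  · rintro rfl
    constructor <;> rw [mul_assoc, mul_one_div_cancel hG, mul_one]

theorem equilibrium_iff_baseline_condition_general
    (u w R p fN : ℝ) (hw : w ∈ Set.Ioc (0 : ℝ) 1)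
    (hR : 1 < R) (hp : p ∈ Set.Ioo (0 : ℝ) (1 / 2))
    (hroot : 2 * (1 - u * R) * w * p ^ 2 +
        (u * w * (R + 1) - 2 * u - 2 * w) * p + u = 0)
    (πC πD : ℝ → ℝ)
    (hπC : ∀ q, πC q = R * q - 1) (hπD : ∀ q, πD q = R * q) :
    ((p = ((1 - u / 2) * p * (1 + w * πC p) +
          (u / 2) * (1 - p) * (1 + w * πD p)) * fN ∧
      1 - p = ((u / 2) * p * (1 + w * πC p) +
          (1 - u / 2) * (1 - p) * (1 + w * πD p)) * fN)
      ↔ fN = 1 / (1 + w * (R - 1) * p)) := by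
  have hG : 0 < 1 + w * (R - 1) * p := by
    have := mul_pos (mul_pos hw.1 (sub_pos.2 hR)) hp.1
    linarith
  rw [hπC, hπD, cooperator_offspring_eq_of_root hroot, defector_offspring_eq_of_root hroot]
  exact fixed_point_iff_eq_one_div hp.1.ne' hG.ne'

/-- The fraction `p` solving the equilibrium polynomial yields a metastable
equilibrium `(pN, (1-p)N)` if and only if the baseline reproductive capacity
satisfies `f_N = 1 / (1 + w(R-1)p)`. -/
theorem equilibrium_iff_baseline_condition
    (u w R p fN : ℝ) (hu : u ∈ Set.Ioo (0 : ℝ) 1) (hw : w ∈ Set.Ioc (0 : ℝ) 1)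
    (hR : 1 < R) (hp : p ∈ Set.Ioo (0 : ℝ) (1 / 2)) (hfN : 0 < fN)
    (hroot : 2 * (1 - u * R) * w * p ^ 2 +
        (u * w * (R + 1) - 2 * u - 2 * w) * p + u = 0)
    (πC πD : ℝ → ℝ)
    (hπC : ∀ q, πC q = R * q - 1) (hπD : ∀ q, πD q = R * q) :
    ((p = ((1 - u / 2) * p * (1 + w * πC p) +
          (u / 2) * (1 - p) * (1 + w * πD p)) * fN ∧
      1 - p = ((u / 2) * p * (1 + w * πC p) +
          (1 - u / 2) * (1 - p) * (1 + w * πD p)) * fN)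
      ↔ fN = 1 / (1 + w * (R - 1) * p)) :=
  equilibrium_iff_baseline_condition_general u w R p fN hw hR hp hroot πC πD hπC hπD
end
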